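/- arXiv:2207.11925 — 2 statements merged into one kernel-verified Lean document; each statement's English description precedes it below -/
import Mathlib

section
/- There exists a (necessarily unique) group homomorphism ρ : W → GL₂(ℚ) with ρ(r₁) = ρ(r₂) = I₂, ρ(r₃) = [[−1, 1], [0, 1]] and ρ(r₄) = [[1, 0], [1, −1]]. This representation is irreducible, and remains irreducible after extension of scalars to ℂ; its character takes the value 2 on r₁ and on r₂, the value 0 on r₃ and on r₄, and the value 0 on r₂r₃. (This is Kondo's irreducible character 2₁ of W, in the convention where r₁, r₂ are reflections in long roots.) -/
open Matrix

/-- The simple roots `α₁, α₂, α₃, α₄` of the root system of type `F₄` in `ℝ⁴`. -/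
noncomputable def F4SimpleRoot : Fin 4 → (Fin 4 → ℝ)
  | 0 => ![0, 1, -1, 0]
  | 1 => ![0, 0, 1, -1]
  | 2 => ![0, 0, 0, 1]
  | 3 => ![1/2, -1/2, -1/2, -1/2]

noncomputable def ccF4 (x : Fin 4 → ℝ) : Fin 2 → ZMod 2 :=
  ![((⌊2 * x 0⌋ : ℤ) : ZMod 2), ((⌊x 0 + x 1 + x 2 + x 3⌋ : ℤ) : ZMod 2)]

def MF4 : Set (Fin 4 → ℝ) := {x | ∃ (a : ℤ) (m : Fin 4 → ℤ), ∀ i, x i = m i + a / 2}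

noncomputable def vF4 : Fin 4 → ℝ := ![1/2, 1/2, 1/2, 1/2]
noncomputable def eF4 : Fin 4 → ℝ := ![0, 0, 0, 1]

noncomputable def TmatF4 (A : Matrix (Fin 4) (Fin 4) ℝ) : Matrix (Fin 2) (Fin 2) (ZMod 2) :=
  !![ccF4 (A.mulVec vF4) 0, ccF4 (A.mulVec eF4) 0;
     ccF4 (A.mulVec vF4) 1, ccF4 (A.mulVec eF4) 1]

lemma ccF4_eval (x : Fin 4 → ℝ) (k s : ℤ) (h1 : 2 * x 0 = (k : ℝ))
    (h2 : x 0 + x 1 + x 2 + x 3 = (s : ℝ)) :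
    ccF4 x = ![(k : ZMod 2), (s : ZMod 2)] := by
  unfold ccF4
  rw [h1, h2, Int.floor_intCast, Int.floor_intCast]

lemma vF4_mem : vF4 ∈ MF4 := ⟨1, 0, fun i => by fin_cases i <;> norm_num [vF4, Matrix.cons_val_two, Matrix.cons_val_three, vecHead, vecTail]⟩
lemma eF4_mem : eF4 ∈ MF4 := ⟨0, ![0,0,0,1], fun i => by fin_cases i <;> norm_num [eF4, Matrix.cons_val_two, Matrix.cons_val_three, vecHead, vecTail]⟩

lemma ccF4_vF4 : ccF4 vF4 = ![1, 0] := by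
  rw [ccF4_eval vF4 1 2 (by norm_num [vF4, Matrix.cons_val_two, Matrix.cons_val_three, vecHead, vecTail]) (by norm_num [vF4, Matrix.cons_val_two, Matrix.cons_val_three, vecHead, vecTail])]
  funext i; fin_cases i <;> decide

lemma ccF4_eF4 : ccF4 eF4 = ![0, 1] := by
  rw [ccF4_eval eF4 0 1 (by norm_num [eF4, Matrix.cons_val_two, Matrix.cons_val_three, vecHead, vecTail]) (by norm_num [eF4, Matrix.cons_val_two, Matrix.cons_val_three, vecHead, vecTail])]
  funext i; fin_cases i <;> decide

lemma mulVec_b0 (B : Matrix (Fin 2) (Fin 2) (ZMod 2)) :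
    B.mulVec ![1, 0] = fun i => B i 0 := by
  funext i; simp [Matrix.mulVec, dotProduct, Fin.sum_univ_two]

lemma mulVec_b1 (B : Matrix (Fin 2) (Fin 2) (ZMod 2)) :
    B.mulVec ![0, 1] = fun i => B i 1 := by
  funext i; simp [Matrix.mulVec, dotProduct, Fin.sum_univ_two]

section Gens
variable (r : Fin 4 → GL (Fin 4) ℝ)
  (hr : ∀ i, ∀ x : Fin 4 → ℝ,
      (r i : Matrix (Fin 4) (Fin 4) ℝ).mulVec x =
        x - (2 * (x ⬝ᵥ F4SimpleRoot i) / (F4SimpleRoot i ⬝ᵥ F4SimpleRoot i)) • F4SimpleRoot i)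

include hr

lemma mulVec_r0 (x : Fin 4 → ℝ) :
    (r 0 : Matrix (Fin 4) (Fin 4) ℝ).mulVec x = ![x 0, x 2, x 1, x 3] := by
  rw [hr 0 x]
  funext i
  fin_cases i <;>
    simp [F4SimpleRoot, dotProduct, Fin.sum_univ_four, vecHead, vecTail] <;> ring

lemma mulVec_r1 (x : Fin 4 → ℝ) :
    (r 1 : Matrix (Fin 4) (Fin 4) ℝ).mulVec x = ![x 0, x 1, x 3, x 2] := by
  rw [hr 1 x]
  funext i
  fin_cases i <;>
    simp [F4SimpleRoot, dotProduct, Fin.sum_univ_four, vecHead, vecTail] <;> ring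

lemma mulVec_r2 (x : Fin 4 → ℝ) :
    (r 2 : Matrix (Fin 4) (Fin 4) ℝ).mulVec x = ![x 0, x 1, x 2, -x 3] := by
  rw [hr 2 x]
  funext i
  fin_cases i <;>
    simp [F4SimpleRoot, dotProduct, Fin.sum_univ_four, vecHead, vecTail] <;> ring

lemma mulVec_r3 (x : Fin 4 → ℝ) :
    (r 3 : Matrix (Fin 4) (Fin 4) ℝ).mulVec x =
      ![(x 0 + x 1 + x 2 + x 3)/2, (x 0 + x 1 - x 2 - x 3)/2,
        (x 0 - x 1 + x 2 - x 3)/2, (x 0 - x 1 - x 2 + x 3)/2] := by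
  rw [hr 3 x]
  funext i
  fin_cases i <;>
    simp [F4SimpleRoot, dotProduct, Fin.sum_univ_four, vecHead, vecTail] <;> ring

end Gens

lemma eq_one_of_mulVec_id (A : Matrix (Fin 4) (Fin 4) ℝ) (h : ∀ x, A.mulVec x = x) :
    A = 1 := by
  ext i j
  have h2 := congrFun (h (Pi.single j 1)) i
  rw [Matrix.mulVec_single_one] at h2
  simp only [Matrix.col_apply] at h2
  rw [h2, Matrix.one_apply, Pi.single_apply]

lemma r_invol (r : Fin 4 → GL (Fin 4) ℝ)
    (hr : ∀ i, ∀ x : Fin 4 → ℝ,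
      (r i : Matrix (Fin 4) (Fin 4) ℝ).mulVec x =
        x - (2 * (x ⬝ᵥ F4SimpleRoot i) / (F4SimpleRoot i ⬝ᵥ F4SimpleRoot i)) • F4SimpleRoot i) :
    ∀ i, r i * r i = 1 := by
  intro i
  apply Units.ext
  show ((r i : Matrix (Fin 4) (Fin 4) ℝ) * (r i : Matrix (Fin 4) (Fin 4) ℝ)) = 1
  apply eq_one_of_mulVec_id
  intro x
  rw [← Matrix.mulVec_mulVec]
  fin_cases i
  · show (↑(r 0) : Matrix (Fin 4) (Fin 4) ℝ) *ᵥ (↑(r 0) : Matrix (Fin 4) (Fin 4) ℝ) *ᵥ x = x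
    rw [mulVec_r0 r hr, mulVec_r0 r hr]
    funext j; fin_cases j <;> simp
  · show (↑(r 1) : Matrix (Fin 4) (Fin 4) ℝ) *ᵥ (↑(r 1) : Matrix (Fin 4) (Fin 4) ℝ) *ᵥ x = x
    rw [mulVec_r1 r hr, mulVec_r1 r hr]
    funext j; fin_cases j <;> simp
  · show (↑(r 2) : Matrix (Fin 4) (Fin 4) ℝ) *ᵥ (↑(r 2) : Matrix (Fin 4) (Fin 4) ℝ) *ᵥ x = x
    rw [mulVec_r2 r hr, mulVec_r2 r hr]
    funext j; fin_cases j <;> simp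
  · show (↑(r 3) : Matrix (Fin 4) (Fin 4) ℝ) *ᵥ (↑(r 3) : Matrix (Fin 4) (Fin 4) ℝ) *ᵥ x = x
    rw [mulVec_r3 r hr, mulVec_r3 r hr]
    funext j; fin_cases j <;> simp <;> ring

def QF4 (A : Matrix (Fin 4) (Fin 4) ℝ) : Prop :=
  (∀ x ∈ MF4, A.mulVec x ∈ MF4 ∧ ccF4 (A.mulVec x) = (TmatF4 A).mulVec (ccF4 x)) ∧
    (TmatF4 A).det = 1

lemma mulVec2 (a b c d u w : ZMod 2) :
    (!![a, b; c, d]).mulVec ![u, w] = ![a*u + b*w, c*u + d*w] := by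
  funext i; fin_cases i <;> simp [Matrix.mulVec, dotProduct, Fin.sum_univ_two]

lemma zmod2_helper (a b : ℤ) (h : 2 ∣ a - b) : ((a : ZMod 2)) = (b : ZMod 2) := by
  have := (ZMod.intCast_zmod_eq_zero_iff_dvd (a - b) 2).mpr h
  push_cast at this
  rwa [sub_eq_zero] at this

lemma zmod2_helper2 (a b c : ℤ) (h : 2 ∣ a - b - c) :
    ((a : ZMod 2)) = (b : ZMod 2) + (c : ZMod 2) := by
  rw [← Int.cast_add]
  exact zmod2_helper _ _ (by omega)

lemma vec2_ext {α : Type*} (A B C D : α) (h1 : A = C) (h2 : B = D) :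
    ![A, B] = ![C, D] := by rw [h1, h2]

lemma ccF4_wit (x : Fin 4 → ℝ) (a : ℤ) (m : Fin 4 → ℤ) (hx : ∀ i, x i = m i + a/2) :
    ccF4 x = ![((2*m 0 + a : ℤ) : ZMod 2), ((m 0 + m 1 + m 2 + m 3 + 2*a : ℤ) : ZMod 2)] := by
  apply ccF4_eval
  · rw [hx 0]; push_cast; ring
  · rw [hx 0, hx 1, hx 2, hx 3]; push_cast; ring

section Gens2
variable (r : Fin 4 → GL (Fin 4) ℝ)
  (hr : ∀ i, ∀ x : Fin 4 → ℝ,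
      (r i : Matrix (Fin 4) (Fin 4) ℝ).mulVec x =
        x - (2 * (x ⬝ᵥ F4SimpleRoot i) / (F4SimpleRoot i ⬝ᵥ F4SimpleRoot i)) • F4SimpleRoot i)

include hr

lemma Tmat_r0 : TmatF4 ↑(r 0) = 1 := by
  unfold TmatF4
  rw [mulVec_r0 r hr vF4, mulVec_r0 r hr eF4,
    ccF4_eval _ 1 2 (by norm_num [vF4, Matrix.cons_val_two, Matrix.cons_val_three, vecHead, vecTail]) (by norm_num [vF4, Matrix.cons_val_two, Matrix.cons_val_three, vecHead, vecTail]),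
    ccF4_eval _ 0 1 (by norm_num [eF4, Matrix.cons_val_two, Matrix.cons_val_three, vecHead, vecTail]) (by norm_num [eF4, Matrix.cons_val_two, Matrix.cons_val_three, vecHead, vecTail])]
  decide

lemma Tmat_r1 : TmatF4 ↑(r 1) = 1 := by
  unfold TmatF4
  rw [mulVec_r1 r hr vF4, mulVec_r1 r hr eF4,
    ccF4_eval _ 1 2 (by norm_num [vF4, Matrix.cons_val_two, Matrix.cons_val_three, vecHead, vecTail]) (by norm_num [vF4, Matrix.cons_val_two, Matrix.cons_val_three, vecHead, vecTail]),
    ccF4_eval _ 0 1 (by norm_num [eF4, Matrix.cons_val_two, Matrix.cons_val_three, vecHead, vecTail]) (by norm_num [eF4, Matrix.cons_val_two, Matrix.cons_val_three, vecHead, vecTail])]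
  decide

lemma Tmat_r2 : TmatF4 ↑(r 2) = !![1,0;1,1] := by
  unfold TmatF4
  rw [mulVec_r2 r hr vF4, mulVec_r2 r hr eF4,
    ccF4_eval _ 1 1 (by norm_num [vF4, Matrix.cons_val_two, Matrix.cons_val_three, vecHead, vecTail]) (by norm_num [vF4, Matrix.cons_val_two, Matrix.cons_val_three, vecHead, vecTail]),
    ccF4_eval _ 0 (-1) (by norm_num [eF4, Matrix.cons_val_two, Matrix.cons_val_three, vecHead, vecTail]) (by norm_num [eF4, Matrix.cons_val_two, Matrix.cons_val_three, vecHead, vecTail])]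
  decide

lemma Tmat_r3 : TmatF4 ↑(r 3) = !![0,1;1,0] := by
  unfold TmatF4
  rw [mulVec_r3 r hr vF4, mulVec_r3 r hr eF4,
    ccF4_eval _ 2 1 (by norm_num [vF4, Matrix.cons_val_two, Matrix.cons_val_three, vecHead, vecTail]) (by norm_num [vF4, Matrix.cons_val_two, Matrix.cons_val_three, vecHead, vecTail]),
    ccF4_eval _ 1 0 (by norm_num [eF4, Matrix.cons_val_two, Matrix.cons_val_three, vecHead, vecTail]) (by norm_num [eF4, Matrix.cons_val_two, Matrix.cons_val_three, vecHead, vecTail])]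
  decide

lemma QF4_r0 : QF4 ↑(r 0) := by
  constructor
  · rintro x ⟨a, m, hx⟩
    rw [mulVec_r0 r hr]
    refine ⟨⟨a, ![m 0, m 2, m 1, m 3], fun i => by
      fin_cases i <;> simp [hx 0, hx 1, hx 2, hx 3]⟩, ?_⟩
    rw [Tmat_r0 r hr, Matrix.one_mulVec, ccF4_wit x a m hx,
      ccF4_wit _ a (![m 0, m 2, m 1, m 3]) (fun i => by
        fin_cases i <;> simp [hx 0, hx 1, hx 2, hx 3])]
    apply vec2_ext <;>
      simp only [Matrix.cons_val_zero, Matrix.cons_val_one, Matrix.cons_val_two,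
        Matrix.cons_val_three, Matrix.head_cons, Matrix.tail_cons, one_mul, zero_mul,
        zero_add, add_zero] <;>
      first
      | (apply zmod2_helper; omega)
      | (apply zmod2_helper2; omega)
  · rw [Tmat_r0 r hr]; simp

lemma QF4_r1 : QF4 ↑(r 1) := by
  constructor
  · rintro x ⟨a, m, hx⟩
    rw [mulVec_r1 r hr]
    refine ⟨⟨a, ![m 0, m 1, m 3, m 2], fun i => by
      fin_cases i <;> simp [hx 0, hx 1, hx 2, hx 3]⟩, ?_⟩
    rw [Tmat_r1 r hr, Matrix.one_mulVec, ccF4_wit x a m hx,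
      ccF4_wit _ a (![m 0, m 1, m 3, m 2]) (fun i => by
        fin_cases i <;> simp [hx 0, hx 1, hx 2, hx 3])]
    apply vec2_ext <;>
      simp only [Matrix.cons_val_zero, Matrix.cons_val_one, Matrix.cons_val_two,
        Matrix.cons_val_three, Matrix.head_cons, Matrix.tail_cons, one_mul, zero_mul,
        zero_add, add_zero] <;>
      first
      | (apply zmod2_helper; omega)
      | (apply zmod2_helper2; omega)
  · rw [Tmat_r1 r hr]; simp

lemma QF4_r2 : QF4 ↑(r 2) := by
  constructor
  · rintro x ⟨a, m, hx⟩
    rw [mulVec_r2 r hr]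
    refine ⟨⟨a, ![m 0, m 1, m 2, -m 3 - a], fun i => by
      fin_cases i <;> (simp [hx 0, hx 1, hx 2, hx 3]; try (push_cast; ring))⟩, ?_⟩
    rw [Tmat_r2 r hr, ccF4_wit x a m hx, mulVec2,
      ccF4_wit _ a (![m 0, m 1, m 2, -m 3 - a]) (fun i => by
        fin_cases i <;> (simp [hx 0, hx 1, hx 2, hx 3]; try (push_cast; ring)))]
    apply vec2_ext <;>
      simp only [Matrix.cons_val_zero, Matrix.cons_val_one, Matrix.cons_val_two,
        Matrix.cons_val_three, Matrix.head_cons, Matrix.tail_cons, one_mul, zero_mul,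
        zero_add, add_zero] <;>
      first
      | (apply zmod2_helper; omega)
      | (apply zmod2_helper2; omega)
  · rw [Tmat_r2 r hr]; decide

lemma QF4_r3 : QF4 ↑(r 3) := by
  constructor
  · rintro x ⟨a, m, hx⟩
    rw [mulVec_r3 r hr]
    refine ⟨⟨m 0 + m 1 + m 2 + m 3 + 2*a,
      ![0, -m 2 - m 3 - a, -m 1 - m 3 - a, -m 1 - m 2 - a], fun i => by
      fin_cases i <;> (simp [hx 0, hx 1, hx 2, hx 3]; try (push_cast; ring))⟩, ?_⟩
    rw [Tmat_r3 r hr, ccF4_wit x a m hx, mulVec2,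
      ccF4_wit _ (m 0 + m 1 + m 2 + m 3 + 2*a)
        (![0, -m 2 - m 3 - a, -m 1 - m 3 - a, -m 1 - m 2 - a]) (fun i => by
        fin_cases i <;> (simp [hx 0, hx 1, hx 2, hx 3]; try (push_cast; ring)))]
    apply vec2_ext <;>
      simp only [Matrix.cons_val_zero, Matrix.cons_val_one, Matrix.cons_val_two,
        Matrix.cons_val_three, Matrix.head_cons, Matrix.tail_cons, one_mul, zero_mul,
        zero_add, add_zero] <;>
      first
      | (apply zmod2_helper; omega)
      | (apply zmod2_helper2; omega)
  · rw [Tmat_r3 r hr]; decide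

end Gens2

lemma Tmat_one : TmatF4 1 = 1 := by
  unfold TmatF4
  rw [Matrix.one_mulVec, Matrix.one_mulVec, ccF4_vF4, ccF4_eF4]
  decide

lemma QF4_one : QF4 1 := by
  refine ⟨fun x hx => ⟨by rwa [Matrix.one_mulVec], by rw [Matrix.one_mulVec, Tmat_one, Matrix.one_mulVec]⟩, ?_⟩
  rw [Tmat_one]; simp

lemma QF4_chain {A B : Matrix (Fin 4) (Fin 4) ℝ} (hA : QF4 A) (hB : QF4 B) :
    ∀ x ∈ MF4, (A * B).mulVec x ∈ MF4 ∧
      ccF4 ((A * B).mulVec x) = (TmatF4 A * TmatF4 B).mulVec (ccF4 x) := by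
  intro x hx
  rw [← Matrix.mulVec_mulVec]
  obtain ⟨hBx, hcB⟩ := hB.1 x hx
  obtain ⟨hABx, hcA⟩ := hA.1 _ hBx
  exact ⟨hABx, by rw [hcA, hcB, Matrix.mulVec_mulVec]⟩

lemma mat2_ext (B C : Matrix (Fin 2) (Fin 2) (ZMod 2))
    (h0 : B.mulVec ![1,0] = C.mulVec ![1,0]) (h1 : B.mulVec ![0,1] = C.mulVec ![0,1]) :
    B = C := by
  rw [mulVec_b0, mulVec_b0] at h0
  rw [mulVec_b1, mulVec_b1] at h1
  ext i j
  fin_cases j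
  · exact congrFun h0 i
  · exact congrFun h1 i

lemma Tmat_col0 (A : Matrix (Fin 4) (Fin 4) ℝ) :
    (TmatF4 A).mulVec ![1,0] = ccF4 (A.mulVec vF4) := by
  funext i
  fin_cases i <;> simp [TmatF4, Matrix.mulVec, dotProduct, Fin.sum_univ_two]

lemma Tmat_col1 (A : Matrix (Fin 4) (Fin 4) ℝ) :
    (TmatF4 A).mulVec ![0,1] = ccF4 (A.mulVec eF4) := by
  funext i
  fin_cases i <;> simp [TmatF4, Matrix.mulVec, dotProduct, Fin.sum_univ_two]

lemma Tmat_mul {A B : Matrix (Fin 4) (Fin 4) ℝ} (hA : QF4 A) (hB : QF4 B) :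
    TmatF4 (A * B) = TmatF4 A * TmatF4 B := by
  have h1 := (QF4_chain hA hB vF4 vF4_mem).2
  have h2 := (QF4_chain hA hB eF4 eF4_mem).2
  apply mat2_ext
  · rw [Tmat_col0, h1, ccF4_vF4]
  · rw [Tmat_col1, h2, ccF4_eF4]

lemma QF4_mul {A B : Matrix (Fin 4) (Fin 4) ℝ} (hA : QF4 A) (hB : QF4 B) :
    QF4 (A * B) := by
  refine ⟨fun x hx => ?_, ?_⟩
  · rw [Tmat_mul hA hB]
    exact QF4_chain hA hB x hx
  · rw [Tmat_mul hA hB, Matrix.det_mul, hA.2, hB.2, mul_one]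

lemma keyF4 (r : Fin 4 → GL (Fin 4) ℝ)
    (hr : ∀ i, ∀ x : Fin 4 → ℝ,
      (r i : Matrix (Fin 4) (Fin 4) ℝ).mulVec x =
        x - (2 * (x ⬝ᵥ F4SimpleRoot i) / (F4SimpleRoot i ⬝ᵥ F4SimpleRoot i)) • F4SimpleRoot i) :
    ∀ g ∈ Subgroup.closure (Set.range r),
      QF4 (↑g : Matrix (Fin 4) (Fin 4) ℝ) ∧ QF4 (↑g⁻¹ : Matrix (Fin 4) (Fin 4) ℝ) := by
  intro g hg
  induction hg using Subgroup.closure_induction with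
  | mem x hx =>
    obtain ⟨i, rfl⟩ := hx
    have h1 : QF4 (↑(r i) : Matrix (Fin 4) (Fin 4) ℝ) := by
      fin_cases i
      exacts [QF4_r0 r hr, QF4_r1 r hr, QF4_r2 r hr, QF4_r3 r hr]
    have h2 : (r i)⁻¹ = r i := inv_eq_of_mul_eq_one_right (r_invol r hr i)
    exact ⟨h1, by rw [h2]; exact h1⟩
  | one =>
    constructor <;> simp only [inv_one, Units.val_one] <;> exact QF4_one
  | mul x y hx hy ihx ihy =>
    constructor
    · rw [Units.val_mul]; exact QF4_mul ihx.1 ihy.1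
    · rw [_root_.mul_inv_rev, Units.val_mul]; exact QF4_mul ihy.2 ihx.2
  | inv x hx ihx =>
    exact ⟨ihx.2, by rw [inv_inv]; exact ihx.1⟩

def psiZ (X : Matrix (Fin 2) (Fin 2) (ZMod 2)) : Matrix (Fin 2) (Fin 2) ℤ :=
  if X = 1 then 1
  else if X = !![1,0;1,1] then !![-1,1;0,1]
  else if X = !![0,1;1,0] then !![1,0;1,-1]
  else if X = !![0,1;1,1] then !![0,-1;1,-1]
  else if X = !![1,1;1,0] then !![-1,1;-1,0]
  else if X = !![1,1;0,1] then !![0,-1;-1,0]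
  else 1

lemma psiZ_mul : ∀ X Y : Matrix (Fin 2) (Fin 2) (ZMod 2), X.det = 1 → Y.det = 1 →
    psiZ (X*Y) = psiZ X * psiZ Y := by decide

def psiQ (X : Matrix (Fin 2) (Fin 2) (ZMod 2)) : Matrix (Fin 2) (Fin 2) ℚ :=
  (psiZ X).map (fun n => (n : ℚ))

lemma psiQ_mul (X Y : Matrix (Fin 2) (Fin 2) (ZMod 2)) (hX : X.det = 1) (hY : Y.det = 1) :
    psiQ (X*Y) = psiQ X * psiQ Y := by
  unfold psiQ
  rw [psiZ_mul X Y hX hY,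
    show (fun n : ℤ => (n : ℚ)) = ⇑(Int.castRingHom ℚ) from rfl, Matrix.map_mul]

lemma castMat (a b c d : ℤ) :
    (!![a, b; c, d]).map (fun n => (n : ℚ)) = !![(a:ℚ), (b:ℚ); (c:ℚ), (d:ℚ)] := by
  ext i j
  fin_cases i <;> fin_cases j <;> simp [Matrix.map_apply]

lemma psiQ_one : psiQ 1 = 1 := by
  unfold psiQ psiZ
  rw [if_pos rfl]
  ext i j
  fin_cases i <;> fin_cases j <;> simp [Matrix.map_apply, Matrix.one_apply]

lemma mulVec2K {K : Type*} [Field K] (a b c d u w : K) :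
    (!![a, b; c, d]).mulVec ![u, w] = ![a*u + b*w, c*u + d*w] := by
  funext i; fin_cases i <;> simp [Matrix.mulVec, dotProduct, Fin.sum_univ_two]

lemma irred2 {K : Type*} [Field K] (h3 : (3:K) ≠ 0)
    (p : Submodule K (Fin 2 → K))
    (hA : ∀ x ∈ p, (!![-1,1;0,1] : Matrix (Fin 2) (Fin 2) K).mulVec x ∈ p)
    (hB : ∀ x ∈ p, (!![1,0;1,-1] : Matrix (Fin 2) (Fin 2) K).mulVec x ∈ p) :
    p = ⊥ ∨ p = ⊤ := by
  by_cases hp : p = ⊥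
  · exact Or.inl hp
  right
  obtain ⟨x, hxp, hx0⟩ := Submodule.exists_mem_ne_zero_of_ne_bot hp
  have hxv : x = ![x 0, x 1] := by funext i; fin_cases i <;> simp
  suffices h : (![1,0] : Fin 2 → K) ∈ p ∧ (![0,1] : Fin 2 → K) ∈ p by
    rw [Submodule.eq_top_iff']
    intro y
    have hy : y = y 0 • ![(1:K),0] + y 1 • ![0,1] := by
      funext i; fin_cases i <;> simp
    rw [hy]
    exact p.add_mem (p.smul_mem _ h.1) (p.smul_mem _ h.2)
  have step01 : (![1,0] : Fin 2 → K) ∈ p → (![0,1] : Fin 2 → K) ∈ p := fun h => by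
    have h2 := hB _ h
    have he : (![0,1] : Fin 2 → K) =
        (!![1,0;1,-1] : Matrix (Fin 2) (Fin 2) K).mulVec ![1,0] - ![1,0] := by
      rw [mulVec2K]; funext i; fin_cases i <;> norm_num
    rw [he]; exact p.sub_mem h2 h
  have step10 : (![0,1] : Fin 2 → K) ∈ p → (![1,0] : Fin 2 → K) ∈ p := fun h => by
    have h2 := hA _ h
    have he : (![1,0] : Fin 2 → K) =
        (!![-1,1;0,1] : Matrix (Fin 2) (Fin 2) K).mulVec ![0,1] - ![0,1] := by
      rw [mulVec2K]; funext i; fin_cases i <;> norm_num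
    rw [he]; exact p.sub_mem h2 h
  have hu : (![2 * x 0 - x 1, 0] : Fin 2 → K) ∈ p := by
    have h2 := hA _ hxp
    rw [hxv, mulVec2K] at h2
    have he : (![2 * x 0 - x 1, 0] : Fin 2 → K) =
        x - ![-1 * x 0 + 1 * x 1, 0 * x 0 + 1 * x 1] := by
      rw [hxv]; funext i; fin_cases i <;> (norm_num; try ring)
    rw [he]; exact p.sub_mem hxp h2
  have hw : (![0, 2 * x 1 - x 0] : Fin 2 → K) ∈ p := by
    have h2 := hB _ hxp
    rw [hxv, mulVec2K] at h2
    have he : (![0, 2 * x 1 - x 0] : Fin 2 → K) =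
        x - ![1 * x 0 + 0 * x 1, 1 * x 0 + -1 * x 1] := by
      rw [hxv]; funext i; fin_cases i <;> (norm_num; try ring)
    rw [he]; exact p.sub_mem hxp h2
  by_cases hab : 2 * x 0 - x 1 = 0
  · by_cases hba : 2 * x 1 - x 0 = 0
    · exfalso
      apply hx0
      have h30 : (3:K) * x 0 = 0 := by linear_combination 2 * hab + hba
      have ha : x 0 = 0 := by
        rcases mul_eq_zero.mp h30 with h | h
        · exact absurd h h3
        · exact h
      have hb : x 1 = 0 := by linear_combination 2 * ha - hab
      funext i; fin_cases i <;> simp [ha, hb]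
    · have h1 : (![0,1] : Fin 2 → K) ∈ p := by
        have := p.smul_mem (2 * x 1 - x 0)⁻¹ hw
        have he : (2 * x 1 - x 0)⁻¹ • (![0, 2 * x 1 - x 0] : Fin 2 → K) = ![0,1] := by
          funext i; fin_cases i <;> simp [inv_mul_cancel₀ hba]
        rwa [he] at this
      exact ⟨step10 h1, h1⟩
  · have h1 : (![1,0] : Fin 2 → K) ∈ p := by
      have := p.smul_mem (2 * x 0 - x 1)⁻¹ hu
      have he : (2 * x 0 - x 1)⁻¹ • (![2 * x 0 - x 1, 0] : Fin 2 → K) = ![1,0] := by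
        funext i; fin_cases i <;> simp [inv_mul_cancel₀ hab]
      rwa [he] at this
    exact ⟨h1, step01 h1⟩

lemma castMatC (a b c d : ℚ) :
    (!![a, b; c, d]).map (fun q => (q : ℂ)) = !![(a:ℂ), (b:ℂ); (c:ℂ), (d:ℂ)] := by
  ext i j
  fin_cases i <;> fin_cases j <;> simp [Matrix.map_apply]

/-- There is a unique group homomorphism `ρ` from the Weyl group `W` of type `F₄` to
`GL₂(ℚ)` (equivalently, a monoid homomorphism to the `2×2` rational matrices, which
automatically takes values in invertible matrices) with `ρ(r₁) = ρ(r₂) = I₂`,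
`ρ(r₃) = [[−1, 1], [0, 1]]` and `ρ(r₄) = [[1, 0], [1, −1]]`. This representation is
irreducible, remains irreducible after extension of scalars to `ℂ`, and its character
takes the value `2` on `r₁, r₂`, the value `0` on `r₃, r₄` and the value `0` on `r₂r₃`.
(This is Kondo's irreducible character `2₁`.) -/
theorem f4_weyl_group_rep_two_one
    (r : Fin 4 → GL (Fin 4) ℝ)
    (hr : ∀ i, ∀ x : Fin 4 → ℝ,
      (r i : Matrix (Fin 4) (Fin 4) ℝ).mulVec x =
        x - (2 * (x ⬝ᵥ F4SimpleRoot i) / (F4SimpleRoot i ⬝ᵥ F4SimpleRoot i)) • F4SimpleRoot i)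
    (W : Subgroup (GL (Fin 4) ℝ))
    (hW : W = Subgroup.closure (Set.range r))
    (hmem : ∀ i, r i ∈ W) :
    (∃! ρ : W →* Matrix (Fin 2) (Fin 2) ℚ,
      ρ ⟨r 0, hmem 0⟩ = 1 ∧ ρ ⟨r 1, hmem 1⟩ = 1 ∧
      ρ ⟨r 2, hmem 2⟩ = !![-1, 1; 0, 1] ∧ ρ ⟨r 3, hmem 3⟩ = !![1, 0; 1, -1]) ∧
    (∀ ρ : W →* Matrix (Fin 2) (Fin 2) ℚ,
      (ρ ⟨r 0, hmem 0⟩ = 1 ∧ ρ ⟨r 1, hmem 1⟩ = 1 ∧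
       ρ ⟨r 2, hmem 2⟩ = !![-1, 1; 0, 1] ∧ ρ ⟨r 3, hmem 3⟩ = !![1, 0; 1, -1]) →
      -- irreducibility over ℚ
      (∀ p : Submodule ℚ (Fin 2 → ℚ),
        (∀ g : W, ∀ x ∈ p, (ρ g).mulVec x ∈ p) → p = ⊥ ∨ p = ⊤) ∧
      -- irreducibility after extension of scalars to ℂ
      (∀ q : Submodule ℂ (Fin 2 → ℂ),
        (∀ g : W, ∀ x ∈ q, ((ρ g).map (fun a => (a : ℂ))).mulVec x ∈ q) →
        q = ⊥ ∨ q = ⊤) ∧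
      -- character values
      (ρ ⟨r 0, hmem 0⟩).trace = 2 ∧ (ρ ⟨r 1, hmem 1⟩).trace = 2 ∧
      (ρ ⟨r 2, hmem 2⟩).trace = 0 ∧ (ρ ⟨r 3, hmem 3⟩).trace = 0 ∧
      (ρ (⟨r 1, hmem 1⟩ * ⟨r 2, hmem 2⟩)).trace = 0) := by

  subst hW
  have key := keyF4 r hr
  let ρ0 : Subgroup.closure (Set.range r) →* Matrix (Fin 2) (Fin 2) ℚ :=
  { toFun := fun g => psiQ (TmatF4 (↑(↑g : GL (Fin 4) ℝ) : Matrix (Fin 4) (Fin 4) ℝ)),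
    map_one' := by
      show psiQ (TmatF4 (↑((1 : GL (Fin 4) ℝ)) : Matrix (Fin 4) (Fin 4) ℝ)) = 1
      rw [Units.val_one, Tmat_one, psiQ_one]
    map_mul' := fun g h => by
      have hg := (key ↑g g.2).1
      have hh := (key ↑h h.2).1
      show psiQ (TmatF4 ((↑(↑g : GL (Fin 4) ℝ) : Matrix (Fin 4) (Fin 4) ℝ) *
        (↑(↑h : GL (Fin 4) ℝ) : Matrix (Fin 4) (Fin 4) ℝ))) = _
      rw [Tmat_mul hg hh, psiQ_mul _ _ hg.2 hh.2] }
  have h0 : ρ0 ⟨r 0, hmem 0⟩ = 1 := by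
    show psiQ (TmatF4 ↑(r 0)) = 1
    rw [Tmat_r0 r hr, psiQ_one]
  have h1 : ρ0 ⟨r 1, hmem 1⟩ = 1 := by
    show psiQ (TmatF4 ↑(r 1)) = 1
    rw [Tmat_r1 r hr, psiQ_one]
  have h2 : ρ0 ⟨r 2, hmem 2⟩ = !![-1, 1; 0, 1] := by
    show psiQ (TmatF4 ↑(r 2)) = _
    rw [Tmat_r2 r hr]
    unfold psiQ psiZ
    rw [if_neg (by decide), if_pos rfl, castMat]
    norm_num
  have h3 : ρ0 ⟨r 3, hmem 3⟩ = !![1, 0; 1, -1] := by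
    show psiQ (TmatF4 ↑(r 3)) = _
    rw [Tmat_r3 r hr]
    unfold psiQ psiZ
    rw [if_neg (by decide), if_neg (by decide), if_pos rfl, castMat]
    norm_num
  constructor
  · refine ⟨ρ0, ⟨h0, h1, h2, h3⟩, ?_⟩
    rintro ρ' ⟨e0, e1, e2, e3⟩
    apply MonoidHom.ext
    rintro ⟨g, hg⟩
    induction hg using Subgroup.closure_induction with
    | mem x hx =>
      obtain ⟨i, rfl⟩ := hx
      fin_cases i
      · exact e0.trans h0.symm
      · exact e1.trans h1.symm
      · exact e2.trans h2.symm
      · exact e3.trans h3.symm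
    | one =>
      show ρ' 1 = ρ0 1
      rw [_root_.map_one, _root_.map_one]
    | mul x y hx hy ihx ihy =>
      show ρ' (⟨x, hx⟩ * ⟨y, hy⟩) = ρ0 (⟨x, hx⟩ * ⟨y, hy⟩)
      rw [_root_.map_mul, _root_.map_mul, ihx, ihy]
    | inv x hx ihx =>
      show ρ' (⟨x, hx⟩⁻¹ : _) = ρ0 (⟨x, hx⟩⁻¹ : _)
      calc ρ' (⟨x, hx⟩⁻¹ : _)
          = ρ' (⟨x, hx⟩⁻¹ : _) * (ρ0 ⟨x, hx⟩ * ρ0 (⟨x, hx⟩⁻¹ : _)) := by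
            rw [← _root_.map_mul, mul_inv_cancel, _root_.map_one, mul_one]
        _ = (ρ' (⟨x, hx⟩⁻¹ : _) * ρ' ⟨x, hx⟩) * ρ0 (⟨x, hx⟩⁻¹ : _) := by
            rw [ihx, mul_assoc]
        _ = ρ0 (⟨x, hx⟩⁻¹ : _) := by
            rw [← _root_.map_mul, inv_mul_cancel, _root_.map_one, one_mul]
  · rintro ρ' ⟨e0, e1, e2, e3⟩
    refine ⟨?_, ?_, ?_, ?_, ?_, ?_, ?_⟩
    · intro p hp
      apply irred2 (by norm_num) p
      · intro x hx
        have := hp ⟨r 2, hmem 2⟩ x hx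
        rwa [e2] at this
      · intro x hx
        have := hp ⟨r 3, hmem 3⟩ x hx
        rwa [e3] at this
    · intro q hq
      apply irred2 (by norm_num) q
      · intro x hx
        have := hq ⟨r 2, hmem 2⟩ x hx
        rwa [e2, castMatC, show ((-1:ℚ):ℂ) = -1 by norm_num,
          show ((1:ℚ):ℂ) = 1 by norm_num, show ((0:ℚ):ℂ) = 0 by norm_num] at this
      · intro x hx
        have := hq ⟨r 3, hmem 3⟩ x hx
        rwa [e3, castMatC, show ((-1:ℚ):ℂ) = -1 by norm_num,
          show ((1:ℚ):ℂ) = 1 by norm_num, show ((0:ℚ):ℂ) = 0 by norm_num] at this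
    · rw [e0, Matrix.trace_one]; norm_num
    · rw [e1, Matrix.trace_one]; norm_num
    · rw [e2, Matrix.trace_fin_two]; norm_num
    · rw [e3, Matrix.trace_fin_two]; norm_num
    · rw [_root_.map_mul, e1, e2, one_mul, Matrix.trace_fin_two]; norm_num
end

section
/- There exists a (necessarily unique) group homomorphism ρ' : W → GL₂(ℚ) with ρ'(r₁) = [[1, 0], [1, −1]], ρ'(r₂) = [[−1, 1], [0, 1]] and ρ'(r₃) = ρ'(r₄) = I₂. This representation is irreducible, and remains irreducible after extension of scalars to ℂ; its character takes the value 0 on r₁ and on r₂, the value 2 on r₃ and on r₄, and the value 0 on r₂r₃. (This is Kondo's irreducible character 2₃ of W, in the convention where r₁, r₂ are reflections in long roots.) -/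
/-!
The lattice `L = D₄` spanned by the long roots (integer vectors with even coordinate sum) is
preserved by `W`, and so is `2L^*`, the vectors of `L` whose coordinates all have the same parity.
Hence `W` acts on `L / 2L^* ≅ 𝔽₂²`, fixing `0`. The short reflections `r₃, r₄` act trivially on
this quotient, while `r₁, r₂` act as two different transpositions of its three nonzero classes.
Composing with the reflection representation of the symmetric group on these three classes gives
`ρ'`; it is unique because the `rᵢ` generate `W`. The matrices `ρ'(r₁), ρ'(r₂)` are the simple
reflections of `A₂`, which have no common eigenline over any field in which `3 ≠ 0`.
-/

open Matrix

open Equiv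

/-- The subrepresentation on the column span of `C`, written in the basis given by the columns:
`hC` says that this span is invariant, and `B` is a left inverse of `C`. -/
def Matrix.compressHom {G n m R : Type*} [Monoid G] [Fintype n] [DecidableEq n] [Fintype m]
    [DecidableEq m] [CommRing R] (P : G →* Matrix n n R) (B : Matrix m n R) (C : Matrix n m R)
    (hBC : B * C = 1) (hC : ∀ g, C * (B * (P g * C)) = P g * C) : G →* Matrix m m R where
  toFun g := B * P g * C
  map_one' := by rw [map_one, Matrix.mul_one, hBC]
  map_mul' g h := by simp only [map_mul, Matrix.mul_assoc, hC]

lemma permMatrixHom_mul_eq_submatrix {n m R : Type*} [Fintype n] [DecidableEq n] [CommRing R]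
    (σ : Perm n) (X : Matrix n m R) :
    (permMatrixHom σ : Matrix n n R) * X = X.submatrix σ.symm id := by
  rw [permMatrixHom_apply, Perm.permMatrix, PEquiv.toMatrix_toPEquiv_mul, Perm.inv_def]

lemma ZMod.two_eq_zero_or_one (a : ZMod 2) : a = 0 ∨ a = 1 := by
  revert a
  decide

lemma ZMod.sum_univ_two {M : Type*} [AddCommMonoid M] (f : ZMod 2 → M) : ∑ x, f x = f 0 + f 1 :=
  Fin.sum_univ_two f

lemma Subgroup.closure_range_hom_ext {G M ι : Type*} [Group G] [Monoid M] {r : ι → G}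
    {f g : closure (Set.range r) →* M}
    (h : ∀ i, f ⟨r i, subset_closure (Set.mem_range_self i)⟩ =
      g ⟨r i, subset_closure (Set.mem_range_self i)⟩) : f = g :=
  MonoidHom.eq_of_eqOn_dense closure_closure_coe_preimage <| by
    rintro ⟨_, hx⟩ ⟨i, rfl⟩
    exact h i

lemma Matrix.map_fin_two_of {α β : Type*} (f : α → β) (a b c d : α) :
    (!![a, b; c, d]).map f = !![f a, f b; f c, f d] := by
  ext i j
  fin_cases i <;> fin_cases j <;> rfl

lemma eq_bot_or_eq_top_of_A2_reflection_invariant {F : Type*} [Field F] (h3 : (3 : F) ≠ 0)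
    (p : Submodule F (Fin 2 → F)) (hβ : ∀ x ∈ p, !![1, 0; 1, -1] *ᵥ x ∈ p)
    (hα : ∀ x ∈ p, !![-1, 1; 0, 1] *ᵥ x ∈ p) : p = ⊥ ∨ p = ⊤ := by
  -- `x - s x` is a multiple of the root of the reflection `s`
  have hα' : ∀ x ∈ p, (2 * x 0 - x 1) • Pi.single 0 1 ∈ p := fun x hx => by
    convert p.sub_mem hx (hα x hx) using 1
    ext i
    fin_cases i <;> simp [dotProduct, Fin.sum_univ_two]
    ring
  have hβ' : ∀ x ∈ p, (2 * x 1 - x 0) • Pi.single 1 1 ∈ p := fun x hx => by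
    convert p.sub_mem hx (hβ x hx) using 1
    ext i
    fin_cases i <;> simp [dotProduct, Fin.sum_univ_two]
    ring
  have he₀ : Pi.single 0 1 ∈ p → Pi.single 1 1 ∈ p := fun h => by
    simpa using p.neg_mem (hβ' _ h)
  have he₁ : Pi.single 1 1 ∈ p → Pi.single 0 1 ∈ p := fun h => by
    simpa using p.neg_mem (hα' _ h)
  refine (eq_or_ne p ⊥).imp_right fun hp => ?_
  obtain ⟨x, hx, hx0⟩ := (Submodule.ne_bot_iff p).mp hp
  have hsingle : Pi.single 0 1 ∈ p ∨ Pi.single 1 1 ∈ p := by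
    by_contra! h
    have a₀ : 2 * x 0 - x 1 = 0 := by
      by_contra hne
      exact h.1 ((p.smul_mem_iff hne).mp (hα' x hx))
    have a₁ : 2 * x 1 - x 0 = 0 := by
      by_contra hne
      exact h.2 ((p.smul_mem_iff hne).mp (hβ' x hx))
    have x₀ : x 0 = 0 :=
      (mul_eq_zero.mp (by linear_combination 2 * a₀ + a₁ : 3 * x 0 = 0)).resolve_left h3
    have x₁ : x 1 = 0 := by linear_combination 2 * x₀ - a₀
    exact hx0 (funext (Fin.forall_fin_two.mpr ⟨x₀, x₁⟩))
  have h₀₁ : Pi.single 0 1 ∈ p ∧ Pi.single 1 1 ∈ p := by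
    rcases hsingle with h | h
    exacts [⟨h, he₀ h⟩, ⟨he₁ h, h⟩]
  rw [Submodule.eq_top_iff']
  intro v
  rw [show v = v 0 • Pi.single 0 1 + v 1 • Pi.single 1 1 by ext i; fin_cases i <;> simp]
  exact p.add_mem (p.smul_mem _ h₀₁.1) (p.smul_mem _ h₀₁.2)

abbrev F2Plane := ZMod 2 × ZMod 2

namespace F2Plane

variable {m R : Type*} [CommRing R]

lemma sum_univ {M : Type*} [AddCommMonoid M] (f : F2Plane → M) :
    ∑ x, f x = f (0, 0) + f (0, 1) + (f (1, 0) + f (1, 1)) := by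
  rw [Fintype.sum_prod_type, ZMod.sum_univ_two, ZMod.sum_univ_two, ZMod.sum_univ_two]

/-- The columns `δ₍₁,₁₎ - δ₍₁,₀₎` and `δ₍₁,₀₎ - δ₍₀,₁₎` are simple roots of the root system
`{δₐ - δ_b}` of type `A₂` on the three nonzero points; the transpositions fixing `(0, 1)`
and `(1, 1)` act on them by the matrices `!![-1, 1; 0, 1]` and `!![1, 0; 1, -1]`. -/
def stdRepBasis (R : Type*) [CommRing R] : Matrix F2Plane (Fin 2) R :=
  (of ![Pi.single (1, 1) 1 - Pi.single (1, 0) 1, Pi.single (1, 0) 1 - Pi.single (0, 1) 1])ᵀ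

def stdRepCoord (R : Type*) [CommRing R] : Matrix (Fin 2) F2Plane R :=
  of ![Pi.single (1, 1) 1, -Pi.single (0, 1) 1]

lemma stdRepCoord_mul (X : Matrix F2Plane m R) : stdRepCoord R * X = of ![X (1, 1), -X (0, 1)] := by
  ext i j
  fin_cases i <;> simp [stdRepCoord, mul_apply, Pi.single_apply]

lemma stdRepCoord_mul_basis : stdRepCoord R * stdRepBasis R = 1 := by
  rw [stdRepCoord_mul]
  ext i j
  fin_cases i <;> fin_cases j <;> simp [stdRepBasis]

lemma stdRepBasis_mul_coord_mul (X : Matrix F2Plane m R) (h0 : ∀ j, X 0 j = 0)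
    (hsum : ∀ j, ∑ x, X x j = 0) : stdRepBasis R * (stdRepCoord R * X) = X := by
  rw [stdRepCoord_mul]
  ext ⟨a, b⟩ j
  have hj := hsum j
  rw [sum_univ, show X (0, 0) j = 0 from h0 j, zero_add] at hj
  rcases a.two_eq_zero_or_one with rfl | rfl <;> rcases b.two_eq_zero_or_one with rfl | rfl <;>
    simp [stdRepBasis, mul_apply, Fin.sum_univ_two]
  · exact (h0 j).symm
  · linear_combination -hj

/-- The reflection representation of the symmetric group of the three nonzero points, on the
functions that vanish at `0` and have sum `0`. -/
def stdRep (R : Type*) [CommRing R] :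
    MulAction.stabilizer (Perm F2Plane) (0 : F2Plane) →* Matrix (Fin 2) (Fin 2) R :=
  compressHom (permMatrixHom.comp (Subgroup.subtype _)) (stdRepCoord R) (stdRepBasis R)
    stdRepCoord_mul_basis fun σ => by
      have hσ : (σ : Perm F2Plane).symm 0 = 0 := by
        rw [Equiv.symm_apply_eq]
        exact σ.2.symm
      simp only [MonoidHom.comp_apply, Subgroup.subtype_apply, permMatrixHom_mul_eq_submatrix]
      apply stdRepBasis_mul_coord_mul
      · intro j
        fin_cases j <;> simp [hσ, stdRepBasis]
      · intro j
        simp only [submatrix_apply, id]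
        rw [Equiv.sum_comp (σ : Perm F2Plane).symm (fun x => stdRepBasis R x j), sum_univ]
        fin_cases j <;> simp [stdRepBasis]

lemma stdRep_apply (σ : MulAction.stabilizer (Perm F2Plane) (0 : F2Plane)) :
    stdRep R σ = of ![stdRepBasis R ((σ : Perm F2Plane).symm (1, 1)),
      -stdRepBasis R ((σ : Perm F2Plane).symm (0, 1))] := by
  simp only [stdRep, compressHom, MonoidHom.coe_mk, OneHom.coe_mk, MonoidHom.comp_apply,
    Subgroup.subtype_apply]
  rw [Matrix.mul_assoc, permMatrixHom_mul_eq_submatrix, stdRepCoord_mul]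
  rfl

lemma stdRep_of_coe_eq_swap {σ : MulAction.stabilizer (Perm F2Plane) (0 : F2Plane)}
    (h : ⇑(σ : Perm F2Plane) = Prod.swap) : stdRep R σ = !![1, 0; 1, -1] := by
  have h₁ : (σ : Perm F2Plane).symm (1, 1) = (1, 1) := by rw [Equiv.symm_apply_eq, h]; rfl
  have h₃ : (σ : Perm F2Plane).symm (0, 1) = (1, 0) := by rw [Equiv.symm_apply_eq, h]; rfl
  rw [stdRep_apply, h₁, h₃]
  ext i j
  fin_cases i <;> fin_cases j <;> simp [stdRepBasis]

lemma stdRep_of_coe_eq_transvection {σ : MulAction.stabilizer (Perm F2Plane) (0 : F2Plane)}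
    (h : ⇑(σ : Perm F2Plane) = fun c => (c.1, c.1 + c.2)) : stdRep R σ = !![-1, 1; 0, 1] := by
  have h₁ : (σ : Perm F2Plane).symm (1, 1) = (1, 0) := by rw [Equiv.symm_apply_eq, h]; rfl
  have h₃ : (σ : Perm F2Plane).symm (0, 1) = (0, 1) := by rw [Equiv.symm_apply_eq, h]; rfl
  rw [stdRep_apply, h₁, h₃]
  ext i j
  fin_cases i <;> fin_cases j <;> simp [stdRepBasis]

end F2Plane

open F2Plane

def IsD4 (n : Fin 4 → ℤ) : Prop := Even (n 0 + n 1 + n 2 + n 3)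

/-- The quotient map `D₄ → D₄ / 2D₄^* ≅ 𝔽₂²`: on `D₄` it vanishes exactly on the vectors whose
coordinates all have the same parity. -/
def d4Class (n : Fin 4 → ℤ) : F2Plane := ((n 0 + n 1 : ℤ), (n 0 + n 2 : ℤ))

def D4Compatible (M : Matrix (Fin 4) (Fin 4) ℝ) (f : Function.End F2Plane) : Prop :=
  ∀ n, IsD4 n → ∃ m, IsD4 m ∧ M *ᵥ (Int.cast ∘ n) = Int.cast ∘ m ∧ d4Class m = f (d4Class n)

lemma exists_isD4_d4Class_eq (c : F2Plane) : ∃ n, IsD4 n ∧ d4Class n = c :=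
  ⟨![0, c.1.val, c.2.val, c.1.val + c.2.val], ⟨c.1.val + c.2.val, by simp⟩, by simp [d4Class]⟩

namespace D4Compatible

variable {M N : Matrix (Fin 4) (Fin 4) ℝ} {f g : Function.End F2Plane}

lemma one : D4Compatible 1 1 :=
  fun n hn => ⟨n, hn, one_mulVec _, rfl⟩

lemma mul (hM : D4Compatible M f) (hN : D4Compatible N g) : D4Compatible (M * N) (f * g) := by
  intro n hn
  obtain ⟨m, hm, hNn, hcm⟩ := hN n hn
  obtain ⟨k, hk, hMm, hck⟩ := hM m hm
  exact ⟨k, hk, by rw [← mulVec_mulVec, hNn, hMm], by rw [hck, hcm]; rfl⟩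

lemma unique (hf : D4Compatible M f) (hg : D4Compatible M g) : f = g := by
  funext c
  obtain ⟨n, hn, rfl⟩ := exists_isD4_d4Class_eq c
  obtain ⟨m, -, hMn, hcm⟩ := hf n hn
  obtain ⟨m', -, hMn', hcm'⟩ := hg n hn
  have : m = m' := Int.cast_injective.comp_left (hMn.symm.trans hMn')
  rw [← hcm, ← hcm', this]

lemma map_zero (hf : D4Compatible M f) : f 0 = 0 := by
  obtain ⟨m, -, hM0, hcm⟩ := hf 0 ⟨0, by simp⟩
  have : m = 0 := Int.cast_injective.comp_left (by simpa using hM0.symm)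
  rw [this, show d4Class 0 = 0 by simp [d4Class]] at hcm
  exact hcm.symm

end D4Compatible

def d4CompatibleSubmonoid : Submonoid (Matrix (Fin 4) (Fin 4) ℝ) where
  carrier := {M | ∃ f, D4Compatible M f}
  one_mem' := ⟨1, .one⟩
  mul_mem' := fun ⟨f, hf⟩ ⟨g, hg⟩ => ⟨f * g, hf.mul hg⟩

noncomputable def d4ClassAction : d4CompatibleSubmonoid →* Function.End F2Plane where
  toFun M := M.2.choose
  map_one' := (1 : d4CompatibleSubmonoid).2.choose_spec.unique .one
  map_mul' M N := (M * N).2.choose_spec.unique (M.2.choose_spec.mul N.2.choose_spec)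

lemma d4Compatible_d4ClassAction (M : d4CompatibleSubmonoid) : D4Compatible M (d4ClassAction M) :=
  M.2.choose_spec

section D4ClassPerm

variable {G : Type*} [Group G]

noncomputable def d4ClassPerm (φ : G →* Matrix (Fin 4) (Fin 4) ℝ)
    (hφ : ∀ g, φ g ∈ d4CompatibleSubmonoid) :
    G →* MulAction.stabilizer (Perm F2Plane) (0 : F2Plane) :=
  MonoidHom.codRestrict (Perm.equivUnitsEnd.symm.toMonoidHom.comp
    (d4ClassAction.comp (φ.codRestrict _ hφ)).toHomUnits) _ fun g =>
      (d4Compatible_d4ClassAction ⟨φ g, hφ g⟩).map_zero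

lemma d4ClassPerm_coe_eq {φ : G →* Matrix (Fin 4) (Fin 4) ℝ}
    {hφ : ∀ g, φ g ∈ d4CompatibleSubmonoid} {g : G} {f : Function.End F2Plane}
    (h : D4Compatible (φ g) f) : ⇑(d4ClassPerm φ hφ g : Perm F2Plane) = f :=
  (d4Compatible_d4ClassAction ⟨φ g, hφ g⟩).unique h

lemma d4ClassPerm_eq_one {φ : G →* Matrix (Fin 4) (Fin 4) ℝ}
    {hφ : ∀ g, φ g ∈ d4CompatibleSubmonoid} {g : G}
    (h : D4Compatible (φ g) 1) : d4ClassPerm φ hφ g = 1 :=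
  Subtype.ext (Equiv.ext (congrFun (d4ClassPerm_coe_eq h)))

end D4ClassPerm

def IsOrthogonalReflection {n : Type*} [Fintype n] (M : Matrix n n ℝ) (a : n → ℝ) : Prop :=
  ∀ x, M *ᵥ x = x - (2 * (x ⬝ᵥ a) / (a ⬝ᵥ a)) • a

namespace IsOrthogonalReflection

lemma mul_self {n : Type*} [Fintype n] [DecidableEq n] {M : Matrix n n ℝ} {a : n → ℝ}
    (h : IsOrthogonalReflection M a) (ha : a ⬝ᵥ a ≠ 0) : M * M = 1 := by
  refine ext_iff_mulVec.mpr fun x => ?_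
  have hMa : M *ᵥ x ⬝ᵥ a = -(x ⬝ᵥ a) := by
    rw [h, sub_dotProduct, smul_dotProduct, smul_eq_mul]
    field_simp
    ring
  rw [← mulVec_mulVec, h (M *ᵥ x), hMa, h x, one_mulVec, mul_neg, neg_div, neg_smul,
    sub_neg_eq_add, sub_add_cancel]

variable {M : Matrix (Fin 4) (Fin 4) ℝ}

lemma d4Compatible_F4SimpleRoot_zero (h : IsOrthogonalReflection M (F4SimpleRoot 0)) :
    D4Compatible M Prod.swap := by
  intro n hn
  refine ⟨![n 0, n 2, n 1, n 3], ?_, ?_, by simp [d4Class]⟩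
  · simpa [IsD4, add_right_comm _ (n 1)] using hn
  · rw [h]
    funext j
    fin_cases j <;> simp [F4SimpleRoot, dotProduct, Fin.sum_univ_four] <;> ring

lemma d4Compatible_F4SimpleRoot_one (h : IsOrthogonalReflection M (F4SimpleRoot 1)) :
    D4Compatible M fun c => (c.1, c.1 + c.2) := by
  intro n hn
  refine ⟨![n 0, n 1, n 3, n 2], ?_, ?_, ?_⟩
  · simpa [IsD4, add_right_comm _ (n 2)] using hn
  · rw [h]
    funext j
    fin_cases j <;> simp [F4SimpleRoot, dotProduct, Fin.sum_univ_four] <;> ring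
  · have hsum := ZMod.intCast_eq_zero_iff_even.mpr hn
    push_cast at hsum
    simp only [d4Class, Prod.mk.injEq]
    push_cast
    refine ⟨by simp, ?_⟩
    linear_combination (norm := ring_nf) hsum
    reduce_mod_char

lemma d4Compatible_F4SimpleRoot_two (h : IsOrthogonalReflection M (F4SimpleRoot 2)) :
    D4Compatible M 1 := by
  intro n hn
  refine ⟨![n 0, n 1, n 2, -n 3], ?_, ?_, rfl⟩
  · obtain ⟨t, ht⟩ := hn
    exact ⟨t - n 3, by simp; linear_combination ht⟩
  · rw [h]
    funext j
    fin_cases j <;> simp [F4SimpleRoot, dotProduct, Fin.sum_univ_four]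
    ring

lemma d4Compatible_F4SimpleRoot_three (h : IsOrthogonalReflection M (F4SimpleRoot 3)) :
    D4Compatible M 1 := by
  intro n hn
  obtain ⟨t, ht⟩ := hn
  set k := t - n 1 - n 2 - n 3
  have hk : (n 0 - n 1 - n 2 - n 3 : ℝ) = 2 * k := by
    have ht' : (n 0 + n 1 + n 2 + n 3 : ℝ) = t + t := by exact_mod_cast ht
    push_cast [k]
    linear_combination ht'
  refine ⟨![n 0 - k, n 1 + k, n 2 + k, n 3 + k], ⟨t + k, by simp; linear_combination ht⟩, ?_, ?_⟩
  · rw [h]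
    funext j
    fin_cases j <;> simp [F4SimpleRoot, dotProduct, Fin.sum_univ_four] <;>
      linear_combination (1 / 2 : ℝ) * hk
  · show d4Class _ = d4Class n
    simp [d4Class]

end IsOrthogonalReflection

lemma F4SimpleRoot_dotProduct_self_ne_zero (i : Fin 4) : F4SimpleRoot i ⬝ᵥ F4SimpleRoot i ≠ 0 := by
  fin_cases i <;> simp [F4SimpleRoot, dotProduct, Fin.sum_univ_four]
  norm_num

section WeylF4

variable {r : Fin 4 → GL (Fin 4) ℝ}

lemma mem_d4CompatibleSubmonoid_of_F4SimpleReflection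
    (hr : ∀ i, IsOrthogonalReflection (r i : Matrix (Fin 4) (Fin 4) ℝ) (F4SimpleRoot i))
    (i : Fin 4) : (r i : Matrix (Fin 4) (Fin 4) ℝ) ∈ d4CompatibleSubmonoid := by
  fin_cases i
  exacts [⟨_, (hr 0).d4Compatible_F4SimpleRoot_zero⟩, ⟨_, (hr 1).d4Compatible_F4SimpleRoot_one⟩,
    ⟨_, (hr 2).d4Compatible_F4SimpleRoot_two⟩, ⟨_, (hr 3).d4Compatible_F4SimpleRoot_three⟩]

lemma mem_d4CompatibleSubmonoid_of_mem_closure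
    (hr : ∀ i, IsOrthogonalReflection (r i : Matrix (Fin 4) (Fin 4) ℝ) (F4SimpleRoot i))
    {g : GL (Fin 4) ℝ} (hg : g ∈ Subgroup.closure (Set.range r)) :
    (g : Matrix (Fin 4) (Fin 4) ℝ) ∈ d4CompatibleSubmonoid := by
  have inv_eq (i : Fin 4) : (r i)⁻¹ = r i := inv_eq_of_mul_eq_one_right <| Units.ext <|
    (hr i).mul_self (F4SimpleRoot_dotProduct_self_ne_zero i)
  induction hg using Subgroup.closure_induction'' with
  | mem _ hx =>
    obtain ⟨i, rfl⟩ := hx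
    exact mem_d4CompatibleSubmonoid_of_F4SimpleReflection hr i
  | inv_mem _ hx =>
    obtain ⟨i, rfl⟩ := hx
    rw [inv_eq]
    exact mem_d4CompatibleSubmonoid_of_F4SimpleReflection hr i
  | one => exact d4CompatibleSubmonoid.one_mem
  | mul _ _ _ _ hx hy => exact d4CompatibleSubmonoid.mul_mem hx hy

noncomputable def weylF4RepTwoThree
    (hr : ∀ i, IsOrthogonalReflection (r i : Matrix (Fin 4) (Fin 4) ℝ) (F4SimpleRoot i)) :
    Subgroup.closure (Set.range r) →* Matrix (Fin 2) (Fin 2) ℚ :=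
  (stdRep ℚ).comp <| d4ClassPerm ((Units.coeHom _).comp (Subgroup.subtype _))
    fun g => mem_d4CompatibleSubmonoid_of_mem_closure hr g.2

lemma weylF4RepTwoThree_zero
    (hr : ∀ i, IsOrthogonalReflection (r i : Matrix (Fin 4) (Fin 4) ℝ) (F4SimpleRoot i)) :
    weylF4RepTwoThree hr ⟨r 0, Subgroup.subset_closure (Set.mem_range_self 0)⟩ =
      !![1, 0; 1, -1] :=
  stdRep_of_coe_eq_swap (d4ClassPerm_coe_eq (hr 0).d4Compatible_F4SimpleRoot_zero)

lemma weylF4RepTwoThree_one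
    (hr : ∀ i, IsOrthogonalReflection (r i : Matrix (Fin 4) (Fin 4) ℝ) (F4SimpleRoot i)) :
    weylF4RepTwoThree hr ⟨r 1, Subgroup.subset_closure (Set.mem_range_self 1)⟩ =
      !![-1, 1; 0, 1] :=
  stdRep_of_coe_eq_transvection (d4ClassPerm_coe_eq (hr 1).d4Compatible_F4SimpleRoot_one)

lemma weylF4RepTwoThree_two
    (hr : ∀ i, IsOrthogonalReflection (r i : Matrix (Fin 4) (Fin 4) ℝ) (F4SimpleRoot i)) :
    weylF4RepTwoThree hr ⟨r 2, Subgroup.subset_closure (Set.mem_range_self 2)⟩ = 1 :=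
  (congrArg (stdRep ℚ) (d4ClassPerm_eq_one (hr 2).d4Compatible_F4SimpleRoot_two)).trans (map_one _)

lemma weylF4RepTwoThree_three
    (hr : ∀ i, IsOrthogonalReflection (r i : Matrix (Fin 4) (Fin 4) ℝ) (F4SimpleRoot i)) :
    weylF4RepTwoThree hr ⟨r 3, Subgroup.subset_closure (Set.mem_range_self 3)⟩ = 1 :=
  (congrArg (stdRep ℚ) (d4ClassPerm_eq_one (hr 3).d4Compatible_F4SimpleRoot_three)).trans
    (map_one _)

end WeylF4

/-- There is a unique group homomorphism `ρ'` from the Weyl group `W` of type `F₄` to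
`GL₂(ℚ)` (equivalently, a monoid homomorphism to the `2×2` rational matrices, which
automatically takes values in invertible matrices) with `ρ'(r₁) = [[1, 0], [1, −1]]`,
`ρ'(r₂) = [[−1, 1], [0, 1]]` and `ρ'(r₃) = ρ'(r₄) = I₂`. This representation is
irreducible, remains irreducible after extension of scalars to `ℂ`, and its character
takes the value `0` on `r₁, r₂`, the value `2` on `r₃, r₄` and the value `0` on `r₂r₃`.
(This is Kondo's irreducible character `2₃`.) -/
theorem f4_weyl_group_rep_two_three
    (r : Fin 4 → GL (Fin 4) ℝ)
    (hr : ∀ i, ∀ x : Fin 4 → ℝ,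
      (r i : Matrix (Fin 4) (Fin 4) ℝ).mulVec x =
        x - (2 * (x ⬝ᵥ F4SimpleRoot i) / (F4SimpleRoot i ⬝ᵥ F4SimpleRoot i)) • F4SimpleRoot i)
    (W : Subgroup (GL (Fin 4) ℝ))
    (hW : W = Subgroup.closure (Set.range r))
    (hmem : ∀ i, r i ∈ W) :
    (∃! ρ' : W →* Matrix (Fin 2) (Fin 2) ℚ,
      ρ' ⟨r 0, hmem 0⟩ = !![1, 0; 1, -1] ∧ ρ' ⟨r 1, hmem 1⟩ = !![-1, 1; 0, 1] ∧
      ρ' ⟨r 2, hmem 2⟩ = 1 ∧ ρ' ⟨r 3, hmem 3⟩ = 1) ∧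
    (∀ ρ' : W →* Matrix (Fin 2) (Fin 2) ℚ,
      (ρ' ⟨r 0, hmem 0⟩ = !![1, 0; 1, -1] ∧ ρ' ⟨r 1, hmem 1⟩ = !![-1, 1; 0, 1] ∧
       ρ' ⟨r 2, hmem 2⟩ = 1 ∧ ρ' ⟨r 3, hmem 3⟩ = 1) →
      -- irreducibility over ℚ
      (∀ p : Submodule ℚ (Fin 2 → ℚ),
        (∀ g : W, ∀ x ∈ p, (ρ' g).mulVec x ∈ p) → p = ⊥ ∨ p = ⊤) ∧
      -- irreducibility after extension of scalars to ℂ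
      (∀ q : Submodule ℂ (Fin 2 → ℂ),
        (∀ g : W, ∀ x ∈ q, ((ρ' g).map (fun a => (a : ℂ))).mulVec x ∈ q) →
        q = ⊥ ∨ q = ⊤) ∧
      -- character values
      (ρ' ⟨r 0, hmem 0⟩).trace = 0 ∧ (ρ' ⟨r 1, hmem 1⟩).trace = 0 ∧
      (ρ' ⟨r 2, hmem 2⟩).trace = 2 ∧ (ρ' ⟨r 3, hmem 3⟩).trace = 2 ∧
      (ρ' (⟨r 1, hmem 1⟩ * ⟨r 2, hmem 2⟩)).trace = 0) := by
  subst hW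
  refine ⟨⟨weylF4RepTwoThree hr, ⟨weylF4RepTwoThree_zero hr, weylF4RepTwoThree_one hr,
    weylF4RepTwoThree_two hr, weylF4RepTwoThree_three hr⟩,
    fun σ ⟨h₀, h₁, h₂, h₃⟩ => Subgroup.closure_range_hom_ext fun i => ?_⟩, ?_⟩
  · fin_cases i
    exacts [h₀.trans (weylF4RepTwoThree_zero hr).symm, h₁.trans (weylF4RepTwoThree_one hr).symm,
      h₂.trans (weylF4RepTwoThree_two hr).symm, h₃.trans (weylF4RepTwoThree_three hr).symm]
  rintro σ ⟨h₀, h₁, h₂, h₃⟩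
  refine ⟨fun p hp => eq_bot_or_eq_top_of_A2_reflection_invariant (by norm_num) p ?_ ?_,
    fun q hq => eq_bot_or_eq_top_of_A2_reflection_invariant (by norm_num) q ?_ ?_,
    by simp [h₀, trace_fin_two], by simp [h₁, trace_fin_two], by simp [h₂], by simp [h₃],
    by rw [map_mul, h₁, h₂, mul_one]; simp [trace_fin_two]⟩
  · simpa only [h₀] using hp ⟨r 0, hmem 0⟩
  · simpa only [h₁] using hp ⟨r 1, hmem 1⟩
  · simpa only [h₀, map_fin_two_of, Rat.cast_one, Rat.cast_zero, Rat.cast_neg] using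
      hq ⟨r 0, hmem 0⟩
  · simpa only [h₁, map_fin_two_of, Rat.cast_one, Rat.cast_zero, Rat.cast_neg] using
      hq ⟨r 1, hmem 1⟩
end
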